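/- arXiv:math/0204293 — 2 statements merged into one kernel-verified Lean document; each statement's English description precedes it below -/
import Mathlib

section
/- Let (D,φ) be an isocrystal over K of dimension d, F^• a filtration of D, and M a lattice in D adapted to F^•, i.e. M = φ(Σ_i p^{-i}(F^i ∩ M)). Suppose u_1,…,u_d is a W(k)-basis of M adapted to the filtration, namely there are integers μ_1 ≥ μ_2 ≥ … ≥ μ_d such that F^i ∩ M = ⊕_{r : μ_r ≥ i} W(k)·u_r for all i ∈ ℤ (so (μ_1,…,μ_d) is the type of F^•). Then the elements e_r := p^{-μ_r}·φ(u_r) form a W(k)-basis of M and p^{μ_1}e_1,…,p^{μ_d}e_d form a W(k)-basis of φ(M); in particular the type of the lattice M equals the type of the filtration F^•. -/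
/-!
Setting: `p` a prime, `k` a perfect field of characteristic `p`, `W(k)` the Witt vectors,
`K(p, k) = Frac(W(k))` and `φ(p, k) : K(p, k) →+* K(p, k)` the automorphism induced by the
Witt-vector Frobenius.  An isocrystal is a finite-dimensional `K(p, k)`-vector space `D`
together with a bijective `φ(p, k)`-semilinear map `φ : D → D`.
-/

open WittVector Module Isocrystal Pointwise

noncomputable section

variable (p : ℕ) [Fact p.Prime] (k : Type) [Field k] [CharP k p] [PerfectRing k p]
variable (D : Type) [AddCommGroup D] [Module K(p, k) D]

/-- `v x = n`, where `v` is the `p`-adic valuation on `K(p, k)` normalized by `v p = 1`: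
`x` equals `p ^ n` times a unit of `W(k)`. -/
def HasVal (x : K(p, k)) (n : ℤ) : Prop :=
  ∃ u : (WittVector p k)ˣ,
    x = (p : K(p, k)) ^ n * algebraMap (WittVector p k) K(p, k) (u : WittVector p k)

/-- A decreasing, exhaustive and separated `ℤ`-indexed filtration by subspaces. -/
def IsZFiltration (F : ℤ → Submodule K(p, k) D) : Prop :=
  Antitone F ∧ (∀ x : D, ∃ i : ℤ, x ∈ F i) ∧ (∀ x : D, (∀ i : ℤ, x ∈ F i) → x = 0)

/-- The filtration `F` is of type `μ`: the `i`-th graded piece `F i / F (i+1)` has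
dimension `#{j | μ j = i}`. -/
def FiltrationOfType {d : ℕ} (F : ℤ → Submodule K(p, k) D) (μ : Fin d → ℤ) : Prop :=
  IsZFiltration p k D F ∧
    ∀ i : ℤ, finrank K(p, k) (F i) =
      finrank K(p, k) (F (i + 1)) + (Finset.univ.filter fun j : Fin d => μ j = i).card

/-- The Hodge number `t_H(F) = ∑ i, i · dim (F i / F (i+1))`. -/
def tH (F : ℤ → Submodule K(p, k) D) : ℤ :=
  ∑ᶠ i : ℤ, i * ((finrank K(p, k) (F i) : ℤ) - (finrank K(p, k) (F (i + 1)) : ℤ))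

/-- The filtration `F` is weakly admissible for the isocrystal `(D, φ)`:
`t_H(F) = t_N(D)` (the valuation of the determinant of any matrix of `φ`), and for every
`φ`-stable subspace `D'`, the Hodge number of the induced filtration is `≤ t_N(D')`. -/
def WeaklyAdmissible (φ : D → D) (F : ℤ → Submodule K(p, k) D) : Prop :=
  (∀ b : Basis (Fin (finrank K(p, k) D)) K(p, k) D,
      HasVal p k (Matrix.det fun i j => b.repr (φ (b j)) i) (tH p k D F)) ∧
  ∀ D' : Submodule K(p, k) D, (∀ x ∈ D', φ x ∈ D') →
    ∀ b' : Basis (Fin (finrank K(p, k) D')) K(p, k) D',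
    ∀ A : Matrix (Fin (finrank K(p, k) D')) (Fin (finrank K(p, k) D')) K(p, k),
      (∀ j, φ (b' j : D) = ∑ i, A i j • (b' i : D)) →
      ∀ n : ℤ, HasVal p k A.det n →
        tH p k D' (fun i => (F i).comap D'.subtype) ≤ n

/-- `(D, φ)` has Newton vector `ν`: `ν` is nonincreasing, `s • ν` is integral for some
`s ≥ 1`, and some `K(p, k)`-basis `b` satisfies `φ^[s] (b i) = p ^ (s • ν i) • b i`. -/
def HasNewtonVector {d : ℕ} (φ : D → D) (ν : Fin d → ℚ) : Prop :=
  Antitone ν ∧ ∃ (s : ℕ) (m : Fin d → ℤ) (b : Basis (Fin d) K(p, k) D),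
    1 ≤ s ∧ (∀ i, (m i : ℚ) = s * ν i) ∧
      ∀ i, φ^[s] (b i) = (p : K(p, k)) ^ (m i) • b i

/-- Dominance order `μ ≥ ν` on nonincreasing vectors: every partial sum of `μ` is at least
the corresponding partial sum of `ν`, with equal total sums. -/
def Dominates {d : ℕ} (μ ν : Fin d → ℚ) : Prop :=
  (∀ r : ℕ, r < d →
      (∑ i ∈ Finset.univ.filter fun i : Fin d => (i : ℕ) < r, ν i) ≤
        ∑ i ∈ Finset.univ.filter fun i : Fin d => (i : ℕ) < r, μ i) ∧
    (∑ i, μ i) = ∑ i, ν i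

variable [Module (WittVector p k) D] [IsScalarTower (WittVector p k) K(p, k) D]

/-- A `W(k)`-lattice in `D`: a finitely generated `W(k)`-submodule spanning `D` over `K(p, k)`. -/
def IsLattice (M : Submodule (WittVector p k) D) : Prop :=
  M.FG ∧ Submodule.span K(p, k) (M : Set D) = ⊤

/-- `v : ι → D` is a `W(k)`-basis of the `W(k)`-submodule `M`. -/
def IsWBasisOf {ι : Type} (v : ι → D) (M : Submodule (WittVector p k) D) : Prop :=
  (∀ i, v i ∈ M) ∧ LinearIndependent (WittVector p k) v ∧
    Submodule.span (WittVector p k) (Set.range v) = M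

/-- The lattice `M` has type `μ`: there is a `W(k)`-basis `e` of `M` such that
`(p ^ μ i • e i)` is a `W(k)`-basis of `φ(M)`. -/
def LatticeOfType {d : ℕ} (φ : D → D) (M : Submodule (WittVector p k) D)
    (μ : Fin d → ℤ) : Prop :=
  ∃ e : Fin d → D, IsWBasisOf p k D e M ∧
    IsWBasisOf p k D (fun i => (p : K(p, k)) ^ (μ i) • e i)
      (Submodule.span (WittVector p k) (φ '' (M : Set D)))

/-!
Put `e r = p^(-μ r) • φ (u r)`. As `u r ∈ F^(μ r) ∩ M`, `e r = φ (p^(-μ r) • u r)` is one of the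
generators of `M` in the adapted description. Conversely a generator `φ (p^(-i) • y)` with
`y ∈ F^i ∩ M` is a `W(k)`-combination of the `φ (p^(-i) • u r) = p^(μ r - i) • e r` with `μ r ≥ i`,
which are integral multiples of the `e r`. Linear independence holds already over `K`, since the
injective semilinear `φ` preserves it, and `p^(μ r) • e r = φ (u r)` generate `φ(M)`.
-/

section AdaptedLattice

variable {p k D}

theorem frobenius_algebraMap (w : WittVector p k) :
    φ(p, k) (algebraMap (WittVector p k) K(p, k) w) =
      algebraMap (WittVector p k) K(p, k) (frobeniusEquiv p k w) :=
  IsFractionRing.ringEquivOfRingEquiv_algebraMap (frobeniusEquiv p k) w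

theorem frobenius_natCast_zpow (n : ℤ) : φ(p, k) ((p : K(p, k)) ^ n) = (p : K(p, k)) ^ n := by
  rw [map_zpow₀, map_natCast]

def wittSemilinear (φ : D →ₛₗ[φ(p, k)] D) :
    D →ₛₗ[(frobeniusEquiv p k : WittVector p k →+* WittVector p k)] D where
  toFun := φ
  map_add' := φ.map_add
  map_smul' w x := by
    rw [← algebraMap_smul K(p, k) w x, φ.map_smulₛₗ, frobenius_algebraMap, algebraMap_smul]
    rfl

omit [Module (WittVector p k) D] [IsScalarTower (WittVector p k) K(p, k) D] in
theorem map_natCast_zpow_smul (φ : D →ₛₗ[φ(p, k)] D) (n : ℤ) (x : D) :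
    φ ((p : K(p, k)) ^ n • x) = (p : K(p, k)) ^ n • φ x := by
  rw [φ.map_smulₛₗ, frobenius_natCast_zpow]

omit [PerfectRing k p] in
theorem natCast_zpow_smul_mem (N : Submodule (WittVector p k) D) {n : ℤ} (hn : 0 ≤ n) {x : D}
    (hx : x ∈ N) : (p : K(p, k)) ^ n • x ∈ N := by
  lift n to ℕ using hn
  rw [zpow_natCast, ← map_natCast (algebraMap (WittVector p k) K(p, k)), ← map_pow,
    algebraMap_smul]
  exact N.smul_mem _ hx

theorem linearIndependent_frobenius_comp (φ : D →ₛₗ[φ(p, k)] D) (hφ : Function.Injective φ)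
    {ι : Type} {u : ι → D} (hu : LinearIndependent (WittVector p k) u) :
    LinearIndependent K(p, k) (φ ∘ u) :=
  (hu.localization K(p, k) (nonZeroDivisors (WittVector p k))).map_of_surjective_injectiveₛ
    φ(p, k) φ.toAddMonoidHom (FractionRing.frobenius p k).surjective hφ φ.map_smulₛₗ

theorem isWBasisOf_frobenius_comp (φ : D →ₛₗ[φ(p, k)] D) (hφ : Function.Injective φ)
    {ι : Type} {u : ι → D} {M : Submodule (WittVector p k) D} (hu : IsWBasisOf p k D u M) :
    IsWBasisOf p k D (φ ∘ u) (Submodule.span (WittVector p k) (φ '' M)) := by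
  refine ⟨fun r => Submodule.subset_span ⟨u r, hu.1 r, rfl⟩,
    (linearIndependent_frobenius_comp φ hφ hu.2.1).restrict_scalars' (WittVector p k), ?_⟩
  have hmap : Submodule.span (WittVector p k) (φ '' M) = M.map (wittSemilinear φ) :=
    Submodule.span_eq (M.map (wittSemilinear φ))
  rw [hmap, ← hu.2.2, Submodule.map_span, Set.range_comp]
  rfl

omit [IsScalarTower (WittVector p k) K(p, k) D] in
theorem natCast_zpow_smul_frobenius_mem_of_adapted (φ : D →ₛₗ[φ(p, k)] D)
    {F : ℤ → Submodule K(p, k) D} {M : Submodule (WittVector p k) D}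
    (hadapted : M = Submodule.span (WittVector p k)
      ((⇑φ) '' (⋃ i : ℤ, (p : K(p, k)) ^ (-i) • ((F i : Set D) ∩ (M : Set D)))))
    {i : ℤ} {x : D} (hxF : x ∈ F i) (hxM : x ∈ M) :
    (p : K(p, k)) ^ (-i) • φ x ∈ M := by
  rw [← map_natCast_zpow_smul, hadapted]
  exact Submodule.subset_span
    ⟨_, Set.mem_iUnion.2 ⟨i, Set.smul_mem_smul_set ⟨hxF, hxM⟩⟩, rfl⟩

theorem le_span_of_adapted (φ : D →ₛₗ[φ(p, k)] D)
    {F : ℤ → Submodule K(p, k) D} {M : Submodule (WittVector p k) D}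
    (hadapted : M = Submodule.span (WittVector p k)
      ((⇑φ) '' (⋃ i : ℤ, (p : K(p, k)) ^ (-i) • ((F i : Set D) ∩ (M : Set D)))))
    {d : ℕ} {u : Fin d → D} {μ : Fin d → ℤ}
    (hadaptedBasis : ∀ i : ℤ, (F i).restrictScalars (WittVector p k) ⊓ M =
      Submodule.span (WittVector p k) (u '' {r : Fin d | i ≤ μ r})) :
    M ≤ Submodule.span (WittVector p k)
      (Set.range fun r => (p : K(p, k)) ^ (-μ r) • φ (u r)) := by
  set N := Submodule.span (WittVector p k)
    (Set.range fun r => (p : K(p, k)) ^ (-μ r) • φ (u r))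
  have hp : (p : K(p, k)) ≠ 0 := FractionRing.p_nonzero p k
  suffices h : ∀ i, (F i).restrictScalars (WittVector p k) ⊓ M ≤
      N.comap ((p : K(p, k)) ^ (-i) • wittSemilinear φ) by
    conv_lhs => rw [hadapted]
    rw [Submodule.span_le]
    rintro _ ⟨_, hz, rfl⟩
    obtain ⟨i, x, hx, rfl⟩ := Set.mem_iUnion.1 hz
    rw [SetLike.mem_coe, map_natCast_zpow_smul]
    exact h i hx
  intro i
  rw [hadaptedBasis i, Submodule.span_le]
  rintro _ ⟨r, hr, rfl⟩
  have hshift : (p : K(p, k)) ^ (-i) • φ (u r) =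
      (p : K(p, k)) ^ (μ r - i) • (p : K(p, k)) ^ (-μ r) • φ (u r) := by
    rw [smul_smul, ← zpow_add₀ hp]
    congr 2
    ring
  simp only [SetLike.mem_coe, Submodule.mem_comap, LinearMap.smul_apply]
  rw [show wittSemilinear φ (u r) = φ (u r) from rfl, hshift]
  exact natCast_zpow_smul_mem N (sub_nonneg.2 hr) (Submodule.subset_span ⟨r, rfl⟩)

end AdaptedLattice

theorem adapted_lattice_type_eq_filtration_type
    (φ : D →ₛₗ[φ(p, k)] D) (hφ : Function.Bijective φ)
    (F : ℤ → Submodule K(p, k) D)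
    (M : Submodule (WittVector p k) D)
    (hadapted : M = Submodule.span (WittVector p k)
      ((⇑φ) '' (⋃ i : ℤ, (p : K(p, k)) ^ (-i) • ((F i : Set D) ∩ (M : Set D)))))
    (d : ℕ) (u : Fin d → D) (hu : IsWBasisOf p k D u M)
    (μ : Fin d → ℤ)
    (hadaptedBasis : ∀ i : ℤ, (F i).restrictScalars (WittVector p k) ⊓ M =
      Submodule.span (WittVector p k) (u '' {r : Fin d | i ≤ μ r})) :
    IsWBasisOf p k D (fun r => (p : K(p, k)) ^ (-μ r) • φ (u r)) M ∧
    IsWBasisOf p k D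
      (fun r => (p : K(p, k)) ^ (μ r) • ((p : K(p, k)) ^ (-μ r) • φ (u r)))
      (Submodule.span (WittVector p k) ((⇑φ) '' (M : Set D))) := by
  have hp : (p : K(p, k)) ≠ 0 := FractionRing.p_nonzero p k
  have hu_mem (r : Fin d) : u r ∈ (F (μ r)).restrictScalars (WittVector p k) ⊓ M := by
    rw [hadaptedBasis]
    exact Submodule.subset_span ⟨r, le_refl (μ r), rfl⟩
  have he_mem (r : Fin d) : (p : K(p, k)) ^ (-μ r) • φ (u r) ∈ M :=
    natCast_zpow_smul_frobenius_mem_of_adapted φ hadapted (hu_mem r).1 (hu_mem r).2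
  have he_indep : LinearIndependent K(p, k) fun r => (p : K(p, k)) ^ (-μ r) • φ (u r) :=
    (linearIndependent_frobenius_comp φ hφ.1 hu.2.1).units_smul
      fun r => Units.mk0 _ (zpow_ne_zero (-μ r) hp)
  refine ⟨⟨he_mem, he_indep.restrict_scalars' _, le_antisymm ?_ (le_span_of_adapted φ hadapted
    hadaptedBasis)⟩, ?_⟩
  · exact Submodule.span_le.2 (Set.range_subset_iff.2 he_mem)
  · simp only [smul_smul, ← zpow_add₀ hp, add_neg_cancel, zpow_zero, one_smul]
    exact isWBasisOf_frobenius_comp φ hφ.1 hu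
end
end

section
/- Let k = 𝔽_p, so that K = Frac(W(𝔽_p)) and the Frobenius automorphism σ of K is the identity. Let D = K² and φ = id_D (a bijective σ-semilinear map, so (D,φ) is an isocrystal with Newton vector ν = (0,0)). For every integer r ≥ 1, although (r,−r) ≥ (0,0) in the dominance order, there exists no weakly admissible filtration of type (r,−r) on (D,φ). -/
/-!
Setting: `p` a prime, `k` a perfect field of characteristic `p`, `W(k)` the Witt vectors,
`K(p, k) = Frac(W(k))` and `φ(p, k) : K(p, k) →+* K(p, k)` the automorphism induced by the
Witt-vector Frobenius.  An isocrystal is a finite-dimensional `K(p, k)`-vector space `D`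
together with a bijective `φ(p, k)`-semilinear map `φ : D → D`.
-/

open WittVector Module Isocrystal

noncomputable section

variable (p : ℕ) [Fact p.Prime] (k : Type) [Field k] [CharP k p] [PerfectRing k p]
variable (D : Type) [AddCommGroup D] [Module K(p, k) D]

/-!
Over `k = 𝔽_p` the Frobenius of `K` is trivial, so `φ = id` fixes every subspace of `D = K²`
and weak admissibility forces `t_H(F ∩ D') ≤ t_N(D') = 0` for every line `D'`. A filtration of
type `(r, -r)` has a line `F^r` with `F^{r+1} = 0`; on it the induced filtration jumps once, in
degree `r`, so `t_H = r > 0`.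
-/

theorem WittVector.FractionRing.frobeniusRingHom_zmodp :
    FractionRing.frobeniusRingHom p (ZMod p) = RingHom.id K(p, ZMod p) := by
  apply IsLocalization.ringHom_ext (nonZeroDivisors (WittVector p (ZMod p)))
  ext x
  simp [FractionRing.frobeniusRingHom, FractionRing.frobenius, frobeniusEquiv, frobenius_zmodp]

theorem dominates_pair_neg_zero {a : ℤ} (ha : 0 ≤ a) :
    Dominates (fun i => ((![a, -a] : Fin 2 → ℤ) i : ℚ)) ![0, 0] := by
  refine ⟨fun s hs => ?_, by simp [Fin.sum_univ_two]⟩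
  interval_cases s <;> simp [Finset.sum_filter, ha]

section

variable {p k D}

omit [PerfectRing k p]

theorem hasNewtonVector_id_zero {d : ℕ} (b : Basis (Fin d) K(p, k) D) :
    HasNewtonVector p k D id (0 : Fin d → ℚ) :=
  ⟨antitone_const, 1, 0, b, le_rfl, by simp, by simp⟩

theorem hasVal_one : HasVal p k 1 0 :=
  ⟨1, by simp⟩

section

omit [CharP k p]

theorem tH_eq_of_eq_top_of_eq_bot {G : ℤ → Submodule K(p, k) D} {a : ℤ}
    (htop : ∀ i ≤ a, G i = ⊤) (hbot : ∀ i, a < i → G i = ⊥) :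
    tH p k D G = a * finrank K(p, k) D := by
  unfold tH
  rw [finsum_eq_single _ a, htop a le_rfl, hbot (a + 1) (lt_add_one a)]
  · simp
  · intro i hi
    rcases hi.lt_or_gt with hi | hi
    · rw [htop i hi.le, htop (i + 1) (by omega), sub_self, mul_zero]
    · rw [hbot i hi, hbot (i + 1) (by omega), sub_self, mul_zero]

theorem tH_comap_subtype_of_eq_bot {F : ℤ → Submodule K(p, k) D} (hF : Antitone F) {a : ℤ}
    (hbot : ∀ i, a < i → F i = ⊥) :
    tH p k (F a) (fun i => (F i).comap (F a).subtype) = a * finrank K(p, k) (F a) :=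
  tH_eq_of_eq_top_of_eq_bot (fun i hi => Submodule.comap_subtype_eq_top.2 (hF hi))
    (fun i hi => by rw [hbot i hi, Submodule.comap_bot, Submodule.ker_subtype])

theorem FiltrationOfType.finrank_pos {d : ℕ} {F : ℤ → Submodule K(p, k) D} {μ : Fin d → ℤ}
    (hF : FiltrationOfType p k D F μ) (j : Fin d) : 0 < finrank K(p, k) (F (μ j)) := by
  have hj : j ∈ Finset.univ.filter fun j' => μ j' = μ j := by simp
  rw [hF.2]
  exact Nat.add_pos_right _ (Finset.card_pos.2 ⟨j, hj⟩)

end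

namespace FiltrationOfType

variable [FiniteDimensional K(p, k) D] {d : ℕ} {F : ℤ → Submodule K(p, k) D} {μ : Fin d → ℤ}

theorem succ_eq_of_forall_ne (hF : FiltrationOfType p k D F μ) {i : ℤ} (hi : ∀ j, μ j ≠ i) :
    F (i + 1) = F i :=
  Submodule.eq_of_le_of_finrank_eq (hF.1.1 (lt_add_one i).le)
    (by simpa [Finset.filter_eq_empty_iff.2 fun j _ => hi j] using (hF.2 i).symm)

theorem eq_bot_of_forall_lt (hF : FiltrationOfType p k D F μ) {i : ℤ} (hi : ∀ j, μ j < i) :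
    F i = ⊥ := by
  have hconst : ∀ i' ≥ i, F i' = F i := by
    intro i' hii'
    induction i', hii' using Int.leInduction with
    | base => rfl
    | succ i' hii' ih => rw [hF.succ_eq_of_forall_ne fun j => (hi j).trans_le hii' |>.ne, ih]
  refine (Submodule.eq_bot_iff _).2 fun x hx => hF.1.2.2 x fun i' => ?_
  rcases le_total i' i with h | h
  · exact hF.1.1 h hx
  · exact hconst i' h ▸ hx

end FiltrationOfType

theorem WeaklyAdmissible.tH_comap_subtype_nonpos_of_id [FiniteDimensional K(p, k) D]
    {F : ℤ → Submodule K(p, k) D} (hF : WeaklyAdmissible p k D id F) (D' : Submodule K(p, k) D) :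
    tH p k D' (fun i => (F i).comap D'.subtype) ≤ 0 :=
  hF.2 D' (fun _ hx => hx) (Module.finBasis K(p, k) D') 1
    (fun j => by simp [Matrix.one_apply, ite_smul]) 0 (by rw [Matrix.det_one]; exact hasVal_one)

end

/-- **Counterexample** (Fontaine–Rapoport, §1, Remarque). Take `k = 𝔽_p`, so that
`K = Frac(W(𝔽_p))` and the Frobenius `σ` of `K` is the identity; let `D = K²` and `φ = id`
(an isocrystal with Newton vector `(0, 0)`).  For every integer `r ≥ 1`, although
`(r, -r) ≥ (0, 0)` in the dominance order, there is no weakly admissible filtration of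
type `(r, -r)` on `(D, φ)`.  (So Theorems 1 and 2 fail for non-algebraically-closed `k`.) -/
theorem no_weakly_admissible_filtration_over_prime_field
    (r : ℤ) (hr : 1 ≤ r) :
    WittVector.FractionRing.frobeniusRingHom p (ZMod p) = RingHom.id K(p, ZMod p) ∧
    HasNewtonVector p (ZMod p) (Fin 2 → K(p, ZMod p))
      (id : (Fin 2 → K(p, ZMod p)) → Fin 2 → K(p, ZMod p)) ![0, 0] ∧
    Dominates (fun i => ((![r, -r] : Fin 2 → ℤ) i : ℚ)) ![0, 0] ∧
    ¬ ∃ F : ℤ → Submodule K(p, ZMod p) (Fin 2 → K(p, ZMod p)),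
        FiltrationOfType p (ZMod p) (Fin 2 → K(p, ZMod p)) F ![r, -r] ∧
        WeaklyAdmissible p (ZMod p) (Fin 2 → K(p, ZMod p)) id F := by
  refine ⟨FractionRing.frobeniusRingHom_zmodp p, ?_, dominates_pair_neg_zero (by omega), ?_⟩
  · rw [show (![0, 0] : Fin 2 → ℚ) = 0 by simp]
    exact hasNewtonVector_id_zero (Pi.basisFun K(p, ZMod p) (Fin 2))
  rintro ⟨F, hF, hWA⟩
  have hbot : ∀ i, r < i → F i = ⊥ := fun i hi =>
    hF.eq_bot_of_forall_lt fun j => by fin_cases j <;> simp <;> omega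
  have hpos : 0 < finrank K(p, ZMod p) (F r) := hF.finrank_pos 0
  have hnonpos := hWA.tH_comap_subtype_nonpos_of_id (F r)
  rw [tH_comap_subtype_of_eq_bot hF.1.1 hbot] at hnonpos
  exact hnonpos.not_gt (by positivity)
end
end
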